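/- Let X be a Gaussian random variable with mean μ and standard deviation σ > 0, let t > 0, and let 0 < ε < 1/2. If −t − μ ≤ Φ⁻¹(ε/2.5)σ, t − μ ≥ Φ⁻¹(1 − ε/2.5)σ, and t ≥ Φ⁻¹(1 − ε/5)σ, then P(−t ≤ X ≤ t) ≥ 1 − ε/2. -/

import Mathlib

open MeasureTheory ProbabilityTheory Set
open scoped NNReal ENNReal

noncomputable def gf (x : ℝ) : ℝ := (Real.sqrt (2 * Real.pi))⁻¹ * Real.exp (-x^2/2)

lemma gf_eq : gaussianPDFReal 0 1 = gf := by
  funext x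
  simp [gaussianPDFReal, gf]

lemma gf_pos (x : ℝ) : 0 < gf x := by
  unfold gf
  positivity

lemma gf_cont : Continuous gf := by
  unfold gf
  continuity

lemma gf_int : Integrable gf := gf_eq ▸ integrable_gaussianPDFReal 0 1

lemma gf_total : ∫ x, gf x = 1 := gf_eq ▸ integral_gaussianPDFReal_eq_one 0 one_ne_zero

lemma gf_deriv (x : ℝ) : HasDerivAt gf (-x * gf x) x := by
  have h1 : HasDerivAt (fun x : ℝ => -x^2/2) (-x) x := by
    have := ((hasDerivAt_pow 2 x).neg).div_const 2
    simpa using this.congr_deriv (by ring)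
  have := (h1.exp).const_mul (Real.sqrt (2 * Real.pi))⁻¹
  unfold gf
  refine this.congr_deriv ?_
  ring

lemma gf_even (x : ℝ) : gf (-x) = gf x := by simp [gf]

lemma gf_tendsto_bot : Filter.Tendsto gf Filter.atBot (nhds 0) := by
  have h1 : Filter.Tendsto (fun x : ℝ => x^2) Filter.atBot Filter.atTop := by
    have h0 : Filter.Tendsto (fun y : ℝ => y^2) Filter.atTop Filter.atTop :=
      Filter.tendsto_pow_atTop (two_ne_zero)
    have := h0.comp (Filter.tendsto_neg_atBot_atTop : Filter.Tendsto (fun x : ℝ => -x) _ _)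
    simpa only [Function.comp_def, neg_sq] using this
  have h2 : Filter.Tendsto (fun x : ℝ => -x^2/2) Filter.atBot Filter.atBot := by
    have := (Filter.tendsto_neg_atTop_atBot.comp h1).atBot_div_const (by norm_num : (0:ℝ) < 2)
    simpa [neg_div] using this
  have h3 := Real.tendsto_exp_atBot.comp h2
  have := h3.const_mul (Real.sqrt (2 * Real.pi))⁻¹
  unfold gf
  simpa only [gf, Function.comp_def, mul_zero] using this

noncomputable def Phi (x : ℝ) : ℝ := ∫ t in Iic x, gf t

lemma N_Iic (x : ℝ) : gaussianReal 0 1 (Iic x) = ENNReal.ofReal (Phi x) := by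
  rw [gaussianReal_apply_eq_integral 0 one_ne_zero, gf_eq]
  rfl

lemma Phi_nonneg (x : ℝ) : 0 ≤ Phi x :=
  setIntegral_nonneg measurableSet_Iic (fun t _ => (gf_pos t).le)

lemma Phi_sub (x y : ℝ) : Phi y - Phi x = ∫ t in x..y, gf t :=
  intervalIntegral.integral_Iic_sub_Iic gf_int.integrableOn gf_int.integrableOn

lemma Phi_strictMono : StrictMono Phi := by
  intro x y hxy
  have h : 0 < ∫ t in x..y, gf t :=
    intervalIntegral.intervalIntegral_pos_of_pos gf_int.intervalIntegrable gf_pos hxy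
  linarith [Phi_sub x y]

lemma Phi_pos (x : ℝ) : 0 < Phi x := by
  have h := Phi_strictMono (show x - 1 < x by linarith)
  linarith [Phi_nonneg (x - 1)]

lemma Phi_neg_eq (x : ℝ) : Phi (-x) = 1 - Phi x := by
  have h1 : Phi (-x) = ∫ t in Ioi x, gf t := by
    rw [Phi, show (-x) = -x from rfl, ← neg_neg x]
    rw [← integral_comp_neg_Iic (-x) gf]
    simp [gf_even]
  have h2 : Phi x + ∫ t in Ioi x, gf t = 1 := by
    rw [Phi, intervalIntegral.integral_Iic_add_Ioi gf_int.integrableOn gf_int.integrableOn, gf_total]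
  linarith

lemma Phi_lt_one (x : ℝ) : Phi x < 1 := by
  have := Phi_pos (-x)
  rw [Phi_neg_eq] at this
  linarith

lemma Phi_zero : Phi 0 = 1/2 := by
  have := Phi_neg_eq 0
  rw [neg_zero] at this
  linarith

lemma Phi_hasDerivAt (x : ℝ) : HasDerivAt Phi (gf x) x := by
  have heq : Phi = fun y => Phi 0 + ∫ t in (0:ℝ)..y, gf t := by
    funext y
    rw [← Phi_sub 0 y]; ring
  rw [heq]
  exact ((gf_cont.integral_hasStrictDerivAt 0 x).hasDerivAt).const_add (Phi 0)

lemma neg_mul_gf_int : Integrable (fun t : ℝ => -t * gf t) := by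
  have h := (integrable_mul_exp_neg_mul_sq (by norm_num : (0:ℝ) < 1/2)).const_mul
    (-(Real.sqrt (2*Real.pi))⁻¹)
  refine h.congr (Filter.Eventually.of_forall fun t => ?_)
  have harg : -(1/2 : ℝ) * t^2 = -t^2/2 := by ring
  show -(Real.sqrt (2*Real.pi))⁻¹ * (t * Real.exp (-(1/2) * t^2)) = -t * gf t
  rw [harg]; unfold gf; ring

lemma int_neg_mul_gf (x : ℝ) : ∫ t in Iic x, -t * gf t = gf x := by
  have h := integral_Iic_of_hasDerivAt_of_tendsto (f := gf) (f' := fun t => -t * gf t) (a := x)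
    gf_cont.continuousWithinAt (fun t _ => gf_deriv t) neg_mul_gf_int.integrableOn gf_tendsto_bot
  simpa using h

lemma mills {x : ℝ} (hx : x < 0) : -x * Phi x ≤ gf x := by
  have hmono : ∫ t in Iic x, -x * gf t ≤ ∫ t in Iic x, -t * gf t := by
    refine setIntegral_mono_on ((gf_int.const_mul _).integrableOn)
      neg_mul_gf_int.integrableOn measurableSet_Iic (fun t ht => ?_)
    have : t ≤ x := ht
    nlinarith [gf_pos t]
  calc -x * Phi x = ∫ t in Iic x, -x * gf t := by
        rw [Phi, ← MeasureTheory.integral_const_mul]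
    _ ≤ ∫ t in Iic x, -t * gf t := hmono
    _ = gf x := int_neg_mul_gf x

noncomputable def HH (x : ℝ) : ℝ := Phi x / gf x

lemma HH_hasDerivAt (x : ℝ) : HasDerivAt HH ((gf x + x * Phi x)/gf x) x := by
  have h := (Phi_hasDerivAt x).div (gf_deriv x) (gf_pos x).ne'
  refine HasDerivAt.congr_deriv (f := Phi / gf) h ?_
  have hne := (gf_pos x).ne'
  field_simp
  ring

lemma HH_mono : MonotoneOn HH (Iic 0) := by
  refine monotoneOn_of_deriv_nonneg (convex_Iic 0) ?_ ?_ ?_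
  · exact fun x _ => (HH_hasDerivAt x).continuousAt.continuousWithinAt
  · exact fun x _ => (HH_hasDerivAt x).differentiableAt.differentiableWithinAt
  · intro x hx
    rw [interior_Iic] at hx
    rw [(HH_hasDerivAt x).deriv]
    have hm := mills hx
    have := gf_pos x
    apply div_nonneg _ (gf_pos x).le
    nlinarith

lemma logPhi_hasDerivAt (x : ℝ) :
    HasDerivAt (fun y => Real.log (Phi y)) (gf x / Phi x) x :=
  (Phi_hasDerivAt x).log (Phi_pos x).ne'

lemma logPhi_concave : ConcaveOn ℝ (Iic 0) (fun y => Real.log (Phi y)) := by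
  refine AntitoneOn.concaveOn_of_deriv (convex_Iic 0) ?_ ?_ ?_
  · exact fun x _ => (logPhi_hasDerivAt x).continuousAt.continuousWithinAt
  · exact fun x _ => (logPhi_hasDerivAt x).differentiableAt.differentiableWithinAt
  · intro x hx y hy hxy
    rw [interior_Iic] at hx hy
    rw [(logPhi_hasDerivAt x).deriv, (logPhi_hasDerivAt y).deriv]
    have hHH := HH_mono (mem_Iic.mpr hx.le) (mem_Iic.mpr hy.le) hxy
    rw [HH, HH, div_le_div_iff₀ (gf_pos x) (gf_pos y)] at hHH
    rw [div_le_div_iff₀ (Phi_pos y) (Phi_pos x)]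
    nlinarith

lemma logconc {a b : ℝ} (ha : a ≤ 0) (hb : b ≤ 0) :
    Phi a * Phi b ≤ Phi ((a + b) / 2) ^ 2 := by
  have h := logPhi_concave.2 ha hb (by norm_num : (0:ℝ) ≤ 1/2) (by norm_num : (0:ℝ) ≤ 1/2)
    (by norm_num)
  have hmid : (1/2 : ℝ) • a + (1/2 : ℝ) • b = (a + b) / 2 := by
    simp [smul_eq_mul]; ring
  rw [hmid, smul_eq_mul, smul_eq_mul] at h
  have h2 : Real.log (Phi a * Phi b) ≤ Real.log (Phi ((a + b) / 2) ^ 2) := by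
    rw [Real.log_mul (Phi_pos a).ne' (Phi_pos b).ne', Real.log_pow]
    push_cast
    linarith
  have := Real.exp_le_exp.mpr h2
  rwa [Real.exp_log (by exact mul_pos (Phi_pos a) (Phi_pos b)), Real.exp_log (by exact pow_pos (Phi_pos _) 2)] at this

/-- SOC inner approximation of a two-sided absolute-value chance constraint
(Lemma 16 of LubinTwoSided): for X ~ N(μ, σ²), if −t − μ ≤ Φ⁻¹(ε/2.5)σ,
t − μ ≥ Φ⁻¹(1 − ε/2.5)σ and t ≥ Φ⁻¹(1 − ε/5)σ, then P(−t ≤ X ≤ t) ≥ 1 − ε/2. -/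
theorem stmt4 {Ω : Type*} [MeasureSpace Ω] [IsProbabilityMeasure (ℙ : Measure Ω)]
    (X : Ω → ℝ) (hX : Measurable X)
    (μ : ℝ) (σ : ℝ≥0) (hσ : 0 < σ)
    (hlaw : Measure.map X ℙ = gaussianReal μ (σ ^ 2))
    (t ε : ℝ) (ht : 0 < t) (hε : ε ∈ Set.Ioo (0 : ℝ) (1/2))
    (Φinv : ℝ → ℝ)
    (hΦ : ∀ p ∈ Set.Ioo (0 : ℝ) 1,
      gaussianReal 0 1 (Set.Iic (Φinv p)) = ENNReal.ofReal p)
    (h1 : -t - μ ≤ Φinv (ε / 2.5) * σ)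
    (h2 : t - μ ≥ Φinv (1 - ε / 2.5) * σ)
    (h3 : t ≥ Φinv (1 - ε / 5) * σ) :
    ENNReal.ofReal (1 - ε / 2) ≤ ℙ {w | -t ≤ X w ∧ X w ≤ t} := by
  obtain ⟨hε0, hε2⟩ := hε
  rw [show ε / 2.5 = 2 * ε / 5 from by rw [show (2.5:ℝ) = 5/2 from by norm_num]; ring] at h1 h2
  set σr : ℝ := (σ : ℝ) with hσr_def
  have hσr : 0 < σr := hσ
  set z1 : ℝ := (-t - μ) / σr with hz1_def
  set z2 : ℝ := (t - μ) / σr with hz2_def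
  have hz12 : z1 ≤ z2 := by
    rw [hz1_def, hz2_def]
    gcongr <;> linarith
  -- quantile fact
  have hPhiPt : ∀ p ∈ Set.Ioo (0 : ℝ) 1, Phi (Φinv p) = p := by
    intro p hp
    have h := hΦ p hp
    rw [N_Iic] at h
    exact (ENNReal.ofReal_eq_ofReal_iff (Phi_nonneg _) hp.1.le).mp h
  -- measure computation
  have hmap1 : Measure.map (fun x : ℝ => σr * x) (gaussianReal 0 1) = gaussianReal 0 (σ^2) := by
    have := gaussianReal_map_const_mul (μ := 0) (v := 1) σr
    rw [show ((σr * ·) : ℝ → ℝ) = fun x : ℝ => σr * x from rfl] at this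
    rw [this]
    congr 1
    · simp
    · ext
      push_cast
      simp [hσr_def]
  have hmap : gaussianReal μ (σ^2) = Measure.map (fun x : ℝ => σr * x + μ) (gaussianReal 0 1) := by
    have hcomp : (fun x : ℝ => σr * x + μ) = (· + μ) ∘ (fun x : ℝ => σr * x) := rfl
    rw [hcomp, ← Measure.map_map (measurable_add_const μ) (measurable_const_mul σr), hmap1,
      gaussianReal_map_add_const μ, zero_add]
  have hpre : (fun x : ℝ => σr * x + μ) ⁻¹' (Icc (-t) t) = Icc z1 z2 := by
    ext x
    simp only [mem_preimage, mem_Icc, hz1_def, hz2_def]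
    rw [div_le_iff₀ hσr, le_div_iff₀ hσr]
    constructor <;> rintro ⟨ha, hb⟩ <;> constructor <;> nlinarith
  have hP : ℙ {w | -t ≤ X w ∧ X w ≤ t} = ENNReal.ofReal (Phi z2 - Phi z1) := by
    have hset : {w | -t ≤ X w ∧ X w ≤ t} = X ⁻¹' (Icc (-t) t) := rfl
    rw [hset, ← Measure.map_apply hX measurableSet_Icc, hlaw, hmap,
      Measure.map_apply ((measurable_id'.const_mul σr).add_const μ) measurableSet_Icc, hpre,
      gaussianReal_apply_eq_integral 0 one_ne_zero, gf_eq,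
      MeasureTheory.integral_Icc_eq_integral_Ioc,
      ← intervalIntegral.integral_of_le hz12, ← Phi_sub]
  rw [hP]
  apply ENNReal.ofReal_le_ofReal
  -- memberships
  have hmem1 : 2 * ε / 5 ∈ Set.Ioo (0:ℝ) 1 := by constructor <;> linarith
  have hmem2 : 1 - 2 * ε / 5 ∈ Set.Ioo (0:ℝ) 1 := by constructor <;> linarith
  have hmem3 : 1 - ε / 5 ∈ Set.Ioo (0:ℝ) 1 := by constructor <;> linarith
  have hu : Phi z1 ≤ 2 * ε / 5 := by
    have hle : z1 ≤ Φinv (2 * ε / 5) := by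
      rw [hz1_def, div_le_iff₀ hσr]
      linarith [h1]
    calc Phi z1 ≤ Phi (Φinv (2 * ε / 5)) := Phi_strictMono.monotone hle
      _ = 2 * ε / 5 := hPhiPt _ hmem1
  have hv : Phi (-z2) ≤ 2 * ε / 5 := by
    have hle : Φinv (1 - 2 * ε / 5) ≤ z2 := by
      rw [hz2_def, le_div_iff₀ hσr]
      linarith [h2]
    have hm := Phi_strictMono.monotone hle
    rw [hPhiPt _ hmem2] at hm
    rw [Phi_neg_eq]
    linarith
  have hmid : Phi ((z1 + -z2) / 2) ≤ ε / 5 := by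
    have hmid_eq : (z1 + -z2) / 2 = -(t / σr) := by
      rw [hz1_def, hz2_def]
      field_simp
      ring
    have hle : Φinv (1 - ε / 5) ≤ t / σr := by
      rw [le_div_iff₀ hσr]
      linarith [h3]
    have hmono := Phi_strictMono.monotone hle
    rw [hPhiPt _ hmem3] at hmono
    rw [hmid_eq, Phi_neg_eq]
    linarith
  have hz1neg : z1 ≤ 0 := by
    by_contra hcon
    push_neg at hcon
    have := Phi_strictMono.monotone hcon.le
    rw [Phi_zero] at this
    linarith
  have hz2neg : -z2 ≤ 0 := by
    by_contra hcon
    push_neg at hcon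
    have := Phi_strictMono.monotone hcon.le
    rw [Phi_zero] at this
    linarith
  have hprod : Phi z1 * Phi (-z2) ≤ (ε / 5)^2 := by
    calc Phi z1 * Phi (-z2) ≤ Phi ((z1 + -z2) / 2) ^ 2 := logconc hz1neg hz2neg
      _ ≤ (ε / 5)^2 := by
        apply pow_le_pow_left₀ (Phi_nonneg _) hmid
  have hu0 := Phi_pos z1
  have hv0 := Phi_pos (-z2)
  have hsym := Phi_neg_eq z2
  nlinarith [mul_nonneg (sub_nonneg.mpr hu) (sub_nonneg.mpr hv), hε0, sq_nonneg ε]
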